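/- For a positive integer m, write it uniquely as m = (n+1)^p · q with q not divisible by n+1. Then the folding/unfolding process for δ^(m) terminates in exactly p steps of the imaginary relation followed by one step of the real relation, and the multiset of lengths appearing in the unfolded expression of δ^(m) is {q (with multiplicity n+1)} ∪ {(n+1)^i q (with multiplicity n) : 0 ≤ i ≤ p−1}, all of whose members are strictly less than m when p ≥ 1 or equal in total weight mδ. -/

import Mathlib

/-- Generators for Kostant partition expressions in type A_n^(1):
`imag j m` is the part (m δ_j); `real c i ℓ` is the part (c δ + α_i^(ℓ));
`dsym m` is the formal symbol δ^(m). -/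
inductive Gen (n : ℕ) : Type
  | imag : Fin n → ℕ → Gen n
  | real : ℕ → Fin (n+1) → ℕ → Gen n
  | dsym : ℕ → Gen n
  deriving DecidableEq

/-- Full unfolding of the symbol δ^(m) under the defining relations. -/
def unfoldDelta (n : ℕ) : ℕ → Multiset (Gen n)
  | 0 => 0
  | (m+1) =>
    if h0 : n = 0 then 0
    else if (m+1) % (n+1) = 0 then
      unfoldDelta n ((m+1)/(n+1)) +
        Multiset.map (fun j : Fin n => Gen.imag j ((m+1)/(n+1))) Finset.univ.val
    else
      Multiset.map (fun j : Fin (n+1) => Gen.real ((m+1)/(n+1)) j ((m+1) % (n+1)))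
        Finset.univ.val
  decreasing_by exact Nat.div_lt_self (Nat.succ_pos m) (by omega)

/-- The size recorded for each part in the unfolding of δ^(m): a real part
(cδ + α_i^(ℓ)) has length (n+1)c + ℓ, and for an imaginary part (kδ_j) we record the
δ-multiple k. -/
def partSize (n : ℕ) : Gen n → ℕ
  | Gen.imag _ k => k
  | Gen.real c _ ℓ => (n+1) * c + ℓ
  | Gen.dsym m => m

open Fin.NatCast in
/-- The weight of a part, as a coefficient vector on the simple roots α_0,...,α_n:
(kδ_j) and δ^(k) have weight kδ, and (cδ + α_i^(ℓ)) has weight cδ + α_i^(ℓ). -/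
def genWt (n : ℕ) : Gen n → (Fin (n+1) → ℤ)
  | Gen.imag _ k => fun _ => (k : ℤ)
  | Gen.dsym k => fun _ => (k : ℤ)
  | Gen.real c i ℓ =>
      (fun _ => (c : ℤ)) + ∑ t ∈ Finset.range ℓ, Pi.single (i - (t : Fin (n+1))) (1 : ℤ)

/-!
Each step of the imaginary relation replaces δ^((n+1)k) by δ^(k) and n imaginary parts of
size k, so after p steps δ^((n+1)^p q) has become δ^(q) together with n parts of each size
(n+1)^i q, i < p; as (n+1) ∤ q, the real relation then turns δ^(q) into n+1 real parts of
length q. The weight is preserved at each step: the imaginary step trades kδ of weight for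
kδ, and the n+1 real parts (cδ + α_i^(ℓ)), i ∈ ℤ/(n+1), have total weight ((n+1)c + ℓ)δ
because their root strings α_i^(ℓ) are the n+1 rotations of one string of length ℓ.
-/

lemma ne_zero_and_ne_zero_of_not_succ_dvd {n m : ℕ} (h : ¬ (n+1) ∣ m) : n ≠ 0 ∧ m ≠ 0 :=
  ⟨by rintro rfl; exact h (one_dvd m), by rintro rfl; exact h (dvd_zero _)⟩

namespace unfoldDelta

variable {n : ℕ}

lemma of_not_dvd {m : ℕ} (h : ¬ (n+1) ∣ m) :
    unfoldDelta n m = (Finset.univ.val : Multiset (Fin (n+1))).map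
      fun j => Gen.real (m / (n+1)) j (m % (n+1)) := by
  obtain ⟨hn, hm⟩ := ne_zero_and_ne_zero_of_not_succ_dvd h
  obtain ⟨k, rfl⟩ := Nat.exists_eq_add_one_of_ne_zero hm
  rw [unfoldDelta, dif_neg hn, if_neg (mt Nat.dvd_of_mod_eq_zero h)]

lemma succ_mul (hn : n ≠ 0) {m : ℕ} (hm : m ≠ 0) :
    unfoldDelta n ((n+1) * m) = unfoldDelta n m +
      (Finset.univ.val : Multiset (Fin n)).map fun j => Gen.imag j m := by
  obtain ⟨k, hk⟩ := Nat.exists_eq_add_one_of_ne_zero (mul_ne_zero n.succ_ne_zero hm)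
  rw [hk, unfoldDelta, dif_neg hn, if_pos (by rw [← hk, Nat.mul_mod_right]), ← hk,
    Nat.mul_div_cancel_left m n.succ_pos]

lemma pow_mul {q : ℕ} (hq : ¬ (n+1) ∣ q) (p : ℕ) :
    unfoldDelta n ((n+1)^p * q) =
      (Finset.univ.val : Multiset (Fin (n+1))).map
        (fun j => Gen.real (q / (n+1)) j (q % (n+1))) +
      ∑ i ∈ Finset.range p,
        (Finset.univ.val : Multiset (Fin n)).map fun j => Gen.imag j ((n+1)^i * q) := by
  obtain ⟨hn, hq0⟩ := ne_zero_and_ne_zero_of_not_succ_dvd hq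
  induction p with
  | zero => simp [of_not_dvd hq]
  | succ p ih =>
    rw [pow_succ', mul_assoc, succ_mul hn (by positivity), ih, Finset.sum_range_succ, add_assoc]

end unfoldDelta

section

variable {n : ℕ}

lemma map_partSize_unfoldDelta_pow_mul {q : ℕ} (hq : ¬ (n+1) ∣ q) (p : ℕ) :
    (unfoldDelta n ((n+1)^p * q)).map (partSize n) =
      Multiset.replicate (n+1) q +
        ∑ i ∈ Finset.range p, Multiset.replicate n ((n+1)^i * q) := by
  rw [unfoldDelta.pow_mul hq, Multiset.map_add, ← Multiset.coe_mapAddMonoidHom,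
    map_sum (Multiset.mapAddMonoidHom (partSize n))]
  simp only [Multiset.coe_mapAddMonoidHom, Multiset.map_map, Function.comp_def, partSize,
    Nat.div_add_mod, Multiset.map_const', Finset.card_val, Finset.card_univ, Fintype.card_fin]

lemma lt_of_mem_replicate_add_sum_replicate {p q L : ℕ} (hn : n ≠ 0) (hq : q ≠ 0)
    (hp : p ≠ 0) (hL : L ∈ Multiset.replicate (n+1) q +
      ∑ i ∈ Finset.range p, Multiset.replicate n ((n+1)^i * q)) :
    L < (n+1)^p * q := by
  have lt_top (i : ℕ) (hi : i < p) : (n+1)^i * q < (n+1)^p * q :=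
    Nat.mul_lt_mul_of_pos_right (Nat.pow_lt_pow_right (by omega) hi) (Nat.pos_of_ne_zero hq)
  simp only [Multiset.mem_add, Multiset.mem_replicate, Multiset.mem_sum, Finset.mem_range] at hL
  rcases hL with ⟨-, rfl⟩ | ⟨i, hi, -, rfl⟩
  · simpa using lt_top 0 (Nat.pos_of_ne_zero hp)
  · exact lt_top i hi

lemma sum_genWt_real (c ℓ : ℕ) :
    ∑ i : Fin (n+1), genWt n (Gen.real c i ℓ) =
      (((n+1) * c + ℓ : ℕ) : ℤ) • fun _ => 1 := by
  have rotate (t : Fin (n+1)) :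
      ∑ i : Fin (n+1), (Pi.single (i - t) 1 : Fin (n+1) → ℤ) = fun _ => 1 :=
    ((Equiv.subRight t).sum_comp fun i => Pi.single i (1 : ℤ)).trans (Finset.univ_sum_single _)
  simp only [genWt, Finset.sum_add_distrib]
  rw [Finset.sum_comm]
  simp only [rotate]
  ext
  simp

lemma sum_map_genWt_unfoldDelta (hn : n ≠ 0) (m : ℕ) :
    ((unfoldDelta n m).map (genWt n)).sum = (m : ℤ) • fun _ => 1 := by
  induction m using Nat.strong_induction_on with | _ m ih => ?_
  by_cases hdvd : (n+1) ∣ m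
  · obtain ⟨k, rfl⟩ := hdvd
    rcases eq_or_ne k 0 with rfl | hk
    · simp [unfoldDelta]
    rw [unfoldDelta.succ_mul hn hk, Multiset.map_add, Multiset.sum_add,
      ih k (lt_mul_left (Nat.pos_of_ne_zero hk) (by omega))]
    ext
    simp only [Multiset.map_map, Function.comp_def, genWt]
    simp
    ring
  · rw [unfoldDelta.of_not_dvd hdvd, Multiset.map_map]
    exact (sum_genWt_real _ _).trans (by rw [Nat.div_add_mod])

end

theorem unfoldDelta_sizes_general (n p q : ℕ) (hnd : ¬ (n+1) ∣ q) :
    ((unfoldDelta n ((n+1)^p * q)).map (partSize n)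
        = Multiset.replicate (n+1) q
          + ∑ i ∈ Finset.range p, Multiset.replicate n ((n+1)^i * q)) ∧
    (1 ≤ p → ∀ L ∈ (unfoldDelta n ((n+1)^p * q)).map (partSize n), L < (n+1)^p * q) ∧
    ((unfoldDelta n ((n+1)^p * q)).map (genWt n)).sum
        = (((n+1)^p * q : ℕ) : ℤ) • (fun _ => 1 : Fin (n+1) → ℤ) := by
  obtain ⟨hn, hq⟩ := ne_zero_and_ne_zero_of_not_succ_dvd hnd
  refine ⟨map_partSize_unfoldDelta_pow_mul hnd p, fun hp L hL => ?_,
    sum_map_genWt_unfoldDelta hn _⟩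
  rw [map_partSize_unfoldDelta_pow_mul hnd p] at hL
  exact lt_of_mem_replicate_add_sum_replicate hn hq (by omega) hL

/-- Write a positive integer m uniquely as m = (n+1)^p · q with (n+1) ∤ q. The
unfolding of δ^(m) terminates (p steps of the imaginary relation followed by one step
of the real relation), and the multiset of sizes of the parts of the unfolded
expression is {q with multiplicity n+1} ∪ {(n+1)^i q with multiplicity n : 0 ≤ i ≤ p-1};
all of its members are strictly less than m when p ≥ 1, and the total weight of the
unfolded expression is mδ. -/
theorem unfoldDelta_sizes (n p q : ℕ) (hn : 1 ≤ n) (hq : 0 < q) (hnd : ¬ (n+1) ∣ q) :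
    ((unfoldDelta n ((n+1)^p * q)).map (partSize n)
        = Multiset.replicate (n+1) q
          + ∑ i ∈ Finset.range p, Multiset.replicate n ((n+1)^i * q)) ∧
    (1 ≤ p → ∀ L ∈ (unfoldDelta n ((n+1)^p * q)).map (partSize n), L < (n+1)^p * q) ∧
    ((unfoldDelta n ((n+1)^p * q)).map (genWt n)).sum
        = (((n+1)^p * q : ℕ) : ℤ) • (fun _ => 1 : Fin (n+1) → ℤ) :=
  unfoldDelta_sizes_general n p q hnd
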